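/- Let ψ = C₁ ∧ … ∧ C_r be a Boolean formula in conjunctive normal form over the variables x₁,…,x_k. If ψ is not satisfiable, then every infinite word agreeing with some k-transducer for Player 1 in the reachability game G_ψ generates a play that visits a vertex of color 2 (hence is winning for Player 2); consequently G_ψ is k-transducer live. -/
import Mathlib


/-- A two-player game arena: Player 1 plays actions from `A` at `V1`-vertices,
Player 2 plays actions from `B` at `V2`-vertices. `F1`/`F2` are the colorings. -/
structure Game (V1 V2 A B : Type) where
  E1 : V1 → A → V2
  E2 : V2 → B → V1
  init : V1
  F1 : V1 → ℕ
  F2 : V2 → ℕ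

/-- A finite-state transducer with output alphabet `A`, input alphabet `B`
and state set `M`. -/
structure Transducer (A B M : Type) where
  start : M
  step : M → B → M
  out : M → A

/-- The transition function extended to input words, starting from state `m`. -/
def Transducer.stepFrom {A B M : Type} (T : Transducer A B M) (m : M) (x : List B) : M :=
  x.foldl T.step m

/-- `L̂ : B* → A`, the output of the transducer after reading an input word. -/
def Transducer.outWord {A B M : Type} (T : Transducer A B M) (x : List B) : A :=
  T.out (T.stepFrom T.start x)

/-- The history (element of `(A×B)*`) consisting of the first `n` rounds of an
infinite word given by `a` and `b`. -/
def hist {A B : Type} (a : ℕ → A) (b : ℕ → B) (n : ℕ) : List (A × B) :=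
  (List.range n).map (fun i => (a i, b i))

/-- The infinite word `a₀b₀a₁b₁…` agrees with the Player-2 strategy `σ`. -/
def AgreesP2 {A B : Type} (σ : List (A × B) → A → B) (a : ℕ → A) (b : ℕ → B) : Prop :=
  ∀ n, b n = σ (hist a b n) (a n)

/-- The infinite word `a₀b₀a₁b₁…` agrees with the Player-1 strategy `τ`. -/
def AgreesP1 {A B : Type} (τ : List (A × B) → A) (a : ℕ → A) (b : ℕ → B) : Prop :=
  ∀ n, a n = τ (hist a b n)

/-- The Player-1 strategy `f_T` induced by a transducer `T`. -/
def Transducer.strat {A B M : Type} (T : Transducer A B M) : List (A × B) → A :=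
  fun h => T.outWord (h.map Prod.snd)

/-- An infinite word agrees with the transducer `T` (for Player 1). -/
def InfAgrees {A B M : Type} (T : Transducer A B M) (a : ℕ → A) (b : ℕ → B) : Prop :=
  AgreesP1 T.strat a b

/-- A finite word in `(A×B)*` agrees with the transducer `T` (for Player 1). -/
def FinAgrees {A B M : Type} (T : Transducer A B M) (w : List (A × B)) : Prop :=
  ∀ i : Fin w.length, (w.get i).1 = T.outWord ((w.take i.val).map Prod.snd)

/-- The infinite word given by `a`, `b` extends the finite word `w`. -/
def ExtendsWord {A B : Type} (w : List (A × B)) (a : ℕ → A) (b : ℕ → B) : Prop :=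
  ∀ i : Fin w.length, a i.val = (w.get i).1 ∧ b i.val = (w.get i).2

/-- The Player-1 vertices `u₀ u₁ u₂ …` of the play generated by the word
`a₀b₀a₁b₁…` from the Player-1 vertex `u0`. -/
def Game.playU {V1 V2 A B : Type} (G : Game V1 V2 A B) (u0 : V1) (a : ℕ → A) (b : ℕ → B) :
    ℕ → V1
  | 0 => u0
  | n + 1 => G.E2 (G.E1 (G.playU u0 a b n) (a n)) (b n)

/-- The sequence of colors `F(u₀) F(v₀) F(u₁) F(v₁) …` along the play generated
by the word `a₀b₀a₁b₁…` from `u0`. -/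
def Game.colorSeq {V1 V2 A B : Type} (G : Game V1 V2 A B) (u0 : V1) (a : ℕ → A) (b : ℕ → B)
    (n : ℕ) : ℕ :=
  if n % 2 = 0 then G.F1 (G.playU u0 a b (n / 2))
  else G.F2 (G.E1 (G.playU u0 a b (n / 2)) (a (n / 2)))

/-- Reachability winning condition for Player 2: some vertex of color 2 occurs. -/
def Game.reachWin {V1 V2 A B : Type} (G : Game V1 V2 A B) (u0 : V1) (a : ℕ → A) (b : ℕ → B) :
    Prop :=
  ∃ n, G.colorSeq u0 a b n = 2

/-- Parity winning condition for Player 2: the largest color occurring infinitely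
often along the play is even. -/
def Game.parityWin {V1 V2 A B : Type} (G : Game V1 V2 A B) (u0 : V1) (a : ℕ → A) (b : ℕ → B) :
    Prop :=
  ∃ c, Even c ∧ {n | G.colorSeq u0 a b n = c}.Infinite ∧
    ∀ d, {n | G.colorSeq u0 a b n = d}.Infinite → d ≤ c

/-- `G` is `k`-transducer live (for the parity winning condition): every finite word
agreeing with some `k`-transducer for Player 1 can be extended to an infinite word that
agrees with some `k`-transducer for Player 1 and whose play is winning for Player 2. -/
def Game.kLiveParity {V1 V2 A B : Type} (G : Game V1 V2 A B) (k : ℕ) : Prop :=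
  ∀ w : List (A × B), (∃ T : Transducer A B (Fin k), FinAgrees T w) →
    ∃ a b, ExtendsWord w a b ∧ (∃ T : Transducer A B (Fin k), InfAgrees T a b) ∧
      G.parityWin G.init a b

/-- `G` is `k`-transducer live (for the reachability winning condition). -/
def Game.kLiveReach {V1 V2 A B : Type} (G : Game V1 V2 A B) (k : ℕ) : Prop :=
  ∀ w : List (A × B), (∃ T : Transducer A B (Fin k), FinAgrees T w) →
    ∃ a b, ExtendsWord w a b ∧ (∃ T : Transducer A B (Fin k), InfAgrees T a b) ∧
      G.reachWin G.init a b

/-- The history of the unique word that agrees with the Player-1 strategy `τ` and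
the Player-2 strategy `σ`. -/
def inducedHist {A B : Type} (τ : List (A × B) → A) (σ : List (A × B) → A → B) :
    ℕ → List (A × B)
  | 0 => []
  | n + 1 =>
      let h := inducedHist τ σ n
      h ++ [(τ h, σ h (τ h))]

/-- The Player-1 actions of the unique word agreeing with `τ` and `σ`. -/
def inducedA {A B : Type} (τ : List (A × B) → A) (σ : List (A × B) → A → B) (n : ℕ) : A :=
  τ (inducedHist τ σ n)

/-- The Player-2 actions of the unique word agreeing with `τ` and `σ`. -/
def inducedB {A B : Type} (τ : List (A × B) → A) (σ : List (A × B) → A → B) (n : ℕ) : B :=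
  σ (inducedHist τ σ n) (inducedA τ σ n)

/-- Player-1 actions in the CNF game: `(i, b)` assigns value `b` to `xᵢ`
(`⊤ᵢ` / `⊥ᵢ`). -/
abbrev CAct1 (k : ℕ) := Fin k × Bool

/-- Player-2 actions: the single dummy action `ε`. -/
abbrev CAct2 : Type := Unit

/-- A clause over `x₁,…,x_k`: `c i b = true` iff the literal asserting that `xᵢ`
has value `b` occurs in the clause. -/
def CClause (k : ℕ) := Fin k → Bool → Bool

/-- The clause `c` is satisfied by the assignment `v`. -/
def CClause.Sat {k : ℕ} (c : CClause k) (v : Fin k → Bool) : Prop :=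
  ∃ i, c i (v i) = true

/-- Satisfiability of the CNF formula `C₁ ∧ … ∧ C_r`. -/
def CNFSat {k r : ℕ} (C : Fin r → CClause k) : Prop :=
  ∃ v : Fin k → Bool, ∀ j : Fin r, (C j).Sat v

/-- Player-1 vertices: Player 1 is about to assign `xᵢ` in stage `j`, the status
flag `β` recording whether `C_j` is already satisfied; plus a Player-1 vertex of each
paradise (`para true` belongs to the Player-2 paradise, `para false` to the
Player-1 paradise). -/
inductive CV1 (k r : ℕ) where
  | node (j : Fin r) (i : Fin k) (β : Bool)
  | para (p : Bool)

/-- Player-2 vertices: the dummy-move vertices after `xᵢ` was assigned in stage `j`,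
plus a Player-2 vertex of each paradise. -/
inductive CV2 (k r : ℕ) where
  | node (j : Fin r) (i : Fin k) (β : Bool)
  | para (p : Bool)

/-- Transitions from Player-1 vertices: the legal action assigning `xᵢ` updates the
status flag; any other action leads to the Player-2 paradise. -/
def cnfE1 {k r : ℕ} (C : Fin r → CClause k) : CV1 k r → CAct1 k → CV2 k r
  | .node j i β, (i', bv) => if i' = i then .node j i (β || C j i bv) else .para true
  | .para p, _ => .para p

/-- Transitions from Player-2 vertices (via the dummy move): proceed to the next
variable; at the end of stage `j`, status `⊥` leads to the Player-2 paradise,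
status `⊤` leads to stage `j+1`, or to the Player-1 paradise after the last stage. -/
def cnfE2 {k r : ℕ} (C : Fin r → CClause k) : CV2 k r → CAct2 → CV1 k r
  | .node j i β, _ =>
      if h : (i : ℕ) + 1 < k then .node j ⟨(i : ℕ) + 1, h⟩ β
      else if β = true then
        if hj : (j : ℕ) + 1 < r then .node ⟨(j : ℕ) + 1, hj⟩ ⟨0, i.pos⟩ false
        else .para false
      else .para true
  | .para p, _ => .para p

/-- Coloring: the Player-2 paradise has color 2, all other vertices color 1. -/
def cnfF1 {k r : ℕ} : CV1 k r → ℕ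
  | .para true => 2
  | _ => 1

def cnfF2 {k r : ℕ} : CV2 k r → ℕ
  | .para true => 2
  | _ => 1

/-- The reachability game `G_ψ` for the CNF formula with clauses `C`. -/
def cnfGame {k r : ℕ} (hk : 0 < k) (hr : 0 < r) (C : Fin r → CClause k) :
    Game (CV1 k r) (CV2 k r) (CAct1 k) CAct2 where
  E1 := cnfE1 C
  E2 := cnfE2 C
  init := .node ⟨0, hr⟩ ⟨0, hk⟩ false
  F1 := cnfF1
  F2 := cnfF2

private lemma unit_list_eq (l : List Unit) : l = List.replicate l.length () := by
  induction l with
  | nil => rfl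
  | cons h t ih =>
    show () :: t = List.replicate (t.length + 1) ()
    rw [List.replicate_succ]
    exact congrArg _ ih

private lemma stepFrom_replicate {A M : Type} (T : Transducer A Unit M) :
    ∀ (n : ℕ) (s : M), T.stepFrom s (List.replicate n ()) = (fun x => T.step x ())^[n] s := by
  intro n
  induction n with
  | zero => intro s; rfl
  | succ n ih =>
    intro s
    rw [List.replicate_succ]
    show ((() :: List.replicate n ()).foldl T.step s) = _
    rw [List.foldl_cons, Function.iterate_succ_apply]
    exact ih (T.step s ())

private lemma cnf_core {k r : ℕ} (hk : 0 < k) (hr : 0 < r)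
    (C : Fin r → CClause k) (hunsat : ¬ CNFSat C) :
    ∀ (a : ℕ → CAct1 k) (b : ℕ → CAct2),
        (∃ T : Transducer (CAct1 k) CAct2 (Fin k), InfAgrees T a b) →
        ∃ n, (cnfGame hk hr C).colorSeq (cnfGame hk hr C).init a b n = 2 := by
  intro a b hTex
  obtain ⟨T, hT⟩ := hTex
  by_contra hno
  push_neg at hno
  -- the transducer output sequence
  set f : Fin k → Fin k := fun s => T.step s () with hf
  set m : ℕ → Fin k := fun n => f^[n] T.start with hm
  have ha : ∀ n, a n = T.out (m n) := by
    intro n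
    rw [hT n]
    show T.outWord ((hist a b n).map Prod.snd) = _
    have hl : (hist a b n).map Prod.snd = List.replicate n () := by
      have h1 := unit_list_eq ((hist a b n).map Prod.snd)
      simpa [hist] using h1
    rw [hl]
    show T.out (T.stepFrom T.start (List.replicate n ())) = _
    rw [stepFrom_replicate]
  -- the play
  set u : ℕ → CV1 k r := (cnfGame hk hr C).playU (cnfGame hk hr C).init a b with hu
  have hu0 : u 0 = .node ⟨0, hr⟩ ⟨0, hk⟩ false := rfl
  have hstep : ∀ t, u (t + 1) = cnfE2 C (cnfE1 C (u t) (a t)) () := fun t => rfl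
  have hu_ne : ∀ t, u t ≠ .para true := by
    intro t h
    apply hno (2 * t)
    unfold Game.colorSeq
    have e1 : (2 * t) % 2 = 0 := by omega
    have e2 : (2 * t) / 2 = t := by omega
    rw [if_pos e1, e2]
    show cnfF1 (u t) = 2
    rw [h]; rfl
  have hv : ∀ t, cnfE1 C (u t) (a t) ≠ .para true := by
    intro t h
    apply hno (2 * t + 1)
    unfold Game.colorSeq
    have e1 : ¬ ((2 * t + 1) % 2 = 0) := by omega
    have e2 : (2 * t + 1) / 2 = t := by omega
    rw [if_neg e1, e2]
    show cnfF2 (cnfE1 C (u t) (a t)) = 2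
    rw [h]; rfl
  -- one round of the game
  have hact : ∀ (t : ℕ) (j : Fin r) (i : Fin k) (β : Bool),
      u t = .node j i β →
      (a t).1 = i ∧
      u (t + 1) = cnfE2 C (.node j i (β || C j i (a t).2)) () := by
    intro t j i β hut
    rcases hat : a t with ⟨i', bv⟩
    have hE1 : cnfE1 C (u t) (a t) =
        if i' = i then .node j i (β || C j i bv) else .para true := by
      rw [hut, hat]; rfl
    have hii : i' = i := by
      by_contra hne
      have h2 := hv t
      rw [hE1, if_neg hne] at h2
      exact h2 rfl
    subst hii
    refine ⟨rfl, ?_⟩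
    rw [hstep t, hE1, if_pos rfl]
  -- one stage of the game
  have hstage : ∀ (n : ℕ) (j : Fin r), u n = .node j ⟨0, hk⟩ false →
      (∀ (iv : ℕ) (hi : iv < k), (a (n + iv)).1 = ⟨iv, hi⟩) ∧
      (∃ i : Fin k, C j i ((a (n + i.1)).2) = true) ∧
      (u (n + k) = if hj : (j : ℕ) + 1 < r then
        .node ⟨(j : ℕ) + 1, hj⟩ ⟨0, hk⟩ false else .para false) := by
    intro n j hn
    have inner : ∀ (iv : ℕ) (hi : iv < k), ∃ β : Bool,
        u (n + iv) = .node j ⟨iv, hi⟩ β ∧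
        (β = true → ∃ i : Fin k, C j i ((a (n + i.1)).2) = true) := by
      intro iv
      induction iv with
      | zero =>
        intro _
        exact ⟨false, by simpa using hn, by simp⟩
      | succ iv ih =>
        intro hi
        have hiv : iv < k := Nat.lt_of_succ_lt hi
        obtain ⟨β, hub, hsat⟩ := ih hiv
        obtain ⟨h1, h2⟩ := hact (n + iv) j ⟨iv, hiv⟩ β hub
        refine ⟨β || C j ⟨iv, hiv⟩ (a (n + iv)).2, ?_, ?_⟩
        · rw [show n + (iv + 1) = (n + iv) + 1 by ring, h2]
          show (if h : iv + 1 < k then _ else _) = _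
          rw [dif_pos hi]
        · intro hβ
          rcases Bool.or_eq_true_iff.mp hβ with hβ1 | hβ2
          · exact hsat hβ1
          · exact ⟨⟨iv, hiv⟩, hβ2⟩
    have hk1 : k - 1 < k := by omega
    obtain ⟨β, hub, hsat⟩ := inner (k - 1) hk1
    obtain ⟨h1, h2⟩ := hact (n + (k - 1)) j ⟨k - 1, hk1⟩ β hub
    have hnk : n + (k - 1) + 1 = n + k := by omega
    rw [hnk] at h2
    set β' : Bool := β || C j ⟨k - 1, hk1⟩ (a (n + (k - 1))).2 with hβ'
    have hE2 : u (n + k) =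
        if β' = true then
          (if hj : (j : ℕ) + 1 < r then
            .node ⟨(j : ℕ) + 1, hj⟩ ⟨0, hk⟩ false else .para false)
        else .para true := by
      rw [h2]
      show (if h : (k - 1) + 1 < k then _ else _) = _
      rw [dif_neg (by omega)]
    have hβt : β' = true := by
      by_contra hβf
      rw [if_neg hβf] at hE2
      exact hu_ne (n + k) hE2
    have hsat' : ∃ i : Fin k, C j i ((a (n + i.1)).2) = true := by
      rcases Bool.or_eq_true_iff.mp hβt with hβ1 | hβ2
      · exact hsat hβ1
      · exact ⟨⟨k - 1, hk1⟩, hβ2⟩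
    refine ⟨?_, hsat', by rw [hE2, if_pos hβt]⟩
    intro iv hi
    obtain ⟨βi, hubi, -⟩ := inner iv hi
    exact (hact (n + iv) j ⟨iv, hi⟩ βi hubi).1
  -- all stages, by induction
  have hstageU : ∀ (jn : ℕ) (hj : jn < r), u (jn * k) = .node ⟨jn, hj⟩ ⟨0, hk⟩ false := by
    intro jn
    induction jn with
    | zero => intro hj; rw [Nat.zero_mul]; exact hu0
    | succ jn ih =>
      intro hj
      have hjn : jn < r := by omega
      obtain ⟨-, -, hend⟩ := hstage (jn * k) ⟨jn, hjn⟩ (ih hjn)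
      rw [dif_pos (show ((⟨jn, hjn⟩ : Fin r) : ℕ) + 1 < r from hj)] at hend
      rw [show (jn + 1) * k = jn * k + k by ring, hend]
  have hA : ∀ (jn : ℕ) (hj : jn < r) (iv : ℕ) (hi : iv < k),
      (a (jn * k + iv)).1 = ⟨iv, hi⟩ :=
    fun jn hj iv hi => (hstage _ _ (hstageU jn hj)).1 iv hi
  have hSat : ∀ (jn : ℕ) (hj : jn < r),
      ∃ i : Fin k, C ⟨jn, hj⟩ i ((a (jn * k + i.1)).2) = true :=
    fun jn hj => (hstage _ _ (hstageU jn hj)).2.1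
  -- the output first components determine the state
  have hout1 : ∀ i : Fin k, (T.out (m i.1)).1 = i := by
    intro i
    have h1 := hA 0 hr i.1 i.2
    rw [ha] at h1
    simpa using h1
  have hinj : Function.Injective (fun s : Fin k => (T.out s).1) := by
    have hsurj : Function.Surjective (fun s : Fin k => (T.out s).1) :=
      fun i => ⟨m i.1, hout1 i⟩
    exact Finite.injective_iff_surjective.mpr hsurj
  have hmper : ∀ (jn : ℕ) (hj : jn < r) (i : Fin k), m (jn * k + i.1) = m i.1 := by
    intro jn hj i
    apply hinj
    show (T.out (m (jn * k + i.1))).1 = (T.out (m i.1)).1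
    rw [hout1 i]
    have h1 := hA jn hj i.1 i.2
    rw [ha] at h1
    simpa using h1
  -- the fixed assignment satisfies all clauses
  apply hunsat
  refine ⟨fun i => (T.out (m i.1)).2, ?_⟩
  intro j
  obtain ⟨i, hci⟩ := hSat j.1 j.2
  refine ⟨i, ?_⟩
  rw [ha, hmper j.1 j.2 i] at hci
  simpa using hci

/-- If the CNF formula `ψ = C₁ ∧ … ∧ C_r` over `x₁,…,x_k` is not
satisfiable, then every infinite word agreeing with some `k`-transducer for Player 1
in the reachability game `G_ψ` generates a play that visits a vertex of color 2
(hence is winning for Player 2); consequently `G_ψ` is `k`-transducer live. -/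
theorem cnf_unsat_implies_live {k r : ℕ} (hk : 0 < k) (hr : 0 < r)
    (C : Fin r → CClause k) (hunsat : ¬ CNFSat C) :
    (∀ (a : ℕ → CAct1 k) (b : ℕ → CAct2),
        (∃ T : Transducer (CAct1 k) CAct2 (Fin k), InfAgrees T a b) →
        ∃ n, (cnfGame hk hr C).colorSeq (cnfGame hk hr C).init a b n = 2) ∧
      (cnfGame hk hr C).kLiveReach k := by
  refine ⟨cnf_core hk hr C hunsat, ?_⟩
  intro w hw
  obtain ⟨T, hTw⟩ := hw
  set a : ℕ → CAct1 k := fun n => T.outWord (List.replicate n ()) with haa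
  set b : ℕ → CAct2 := fun _ => () with hbb
  have hag : InfAgrees T a b := by
    intro n
    show T.outWord (List.replicate n ()) = T.strat (hist a b n)
    unfold Transducer.strat
    have h1 : (hist a b n).map Prod.snd = List.replicate n () := by
      have h2 := unit_list_eq ((hist a b n).map Prod.snd)
      simpa [hist] using h2
    rw [h1]
  refine ⟨a, b, ?_, ⟨T, hag⟩, ?_⟩
  · intro i
    constructor
    · have h1 := hTw i
      rw [h1]
      show T.outWord (List.replicate i.val ()) = _
      congr 1
      have h2 := unit_list_eq ((w.take i.val).map Prod.snd)
      have h3 : ((w.take i.val).map Prod.snd).length = i.val := by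
        simp only [List.length_map, List.length_take]
        omega
      rw [h3] at h2
      exact h2.symm
    · rfl
  · exact cnf_core hk hr C hunsat a b ⟨T, hag⟩
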